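/- Let K be a field and k₁, …, k_r ≥ 2 multiplicatively independent integers. The K-algebra homomorphism from the iterated skew polynomial ring K[x][y₁;σ₁]…[y_r;σ_r] (where σ_i(x) = x^{k_i}, σ_i(y_j) = y_j for j < i) to End_K(K⟦x⟧) sending x to multiplication by x and y_i to the Mahler operator M_{k_i} : F(x) ↦ F(x^{k_i}) is injective. -/

import Mathlib

open scoped Classical

/-- Substitution `x ↦ x^m` in a formal power series (for `m ≥ 1`): the Mahler operator. -/
noncomputable def substPow {K : Type*} [Semiring K] (m : ℕ) (F : PowerSeries K) :
    PowerSeries K :=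
  PowerSeries.mk fun n => if m ≠ 0 ∧ m ∣ n then PowerSeries.coeff (n / m) F else 0

/-- A polynomial regarded as a power series. -/
noncomputable def toPS {K : Type*} [Semiring K] (P : Polynomial K) : PowerSeries K :=
  PowerSeries.mk fun n => P.coeff n

/-!
Apply the operator to `F = X^N`. The result is the polynomial `∑ P_idx X^(m_idx N)` with
`m_idx = ∏ k_i^idx_i`, and the `m_idx` are pairwise distinct by multiplicative independence.
Once `N` exceeds the degrees of all `P_idx`, the summands occupy the disjoint windows of
exponents `[m_idx N, m_idx N + N)`, so every coefficient of every `P_idx` can be read off.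
-/

open Polynomial

theorem toPS_eq_coe {R : Type*} [Semiring R] (P : R[X]) : toPS P = (P : PowerSeries R) := by
  ext n
  simp [toPS]

theorem substPow_X_pow {R : Type*} [Semiring R] {m : ℕ} (hm : m ≠ 0) (N : ℕ) :
    substPow m ((PowerSeries.X : PowerSeries R) ^ N) = PowerSeries.X ^ (m * N) := by
  ext n
  simp only [substPow, PowerSeries.coeff_mk, PowerSeries.coeff_X_pow, ne_eq, hm,
    not_false_eq_true, true_and]
  by_cases hd : m ∣ n
  · obtain ⟨c, rfl⟩ := hd
    simp [Nat.mul_div_cancel_left _ (Nat.pos_of_ne_zero hm), hm]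
  · rw [if_neg hd, if_neg]
    rintro rfl
    exact hd (dvd_mul_right m N)

theorem prod_pow_injective_of_multiplicativelyIndependent {ι : Type*} [Fintype ι] {k : ι → ℕ}
    (hk : ∀ i, k i ≠ 0)
    (hindep : ∀ e : ι → ℤ, (∏ i, ((k i : ℚ) ^ (e i))) = 1 → e = 0) :
    Function.Injective fun e : ι → ℕ => ∏ i, k i ^ e i := by
  intro a b hab
  have hk' : ∀ i, (k i : ℚ) ≠ 0 := fun i => Nat.cast_ne_zero.mpr (hk i)
  have hcast : ∀ e : ι → ℕ, ((∏ i, k i ^ e i : ℕ) : ℚ) = ∏ i, (k i : ℚ) ^ (e i : ℤ) := by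
    intro e
    simp
  have hne : ((∏ i, k i ^ b i : ℕ) : ℚ) ≠ 0 := by
    simp [Finset.prod_eq_zero_iff, hk]
  have hquot : ∏ i, (k i : ℚ) ^ ((a i : ℤ) - b i) = 1 := by
    simp_rw [zpow_sub₀ (hk' _), Finset.prod_div_distrib, ← hcast]
    exact (div_eq_one_iff_eq hne).mpr (congrArg _ hab)
  funext i
  simpa [sub_eq_zero] using congrFun (hindep _ hquot) i

theorem sum_toPS_mul_substPow_X_pow {R ι : Type*} [Semiring R] (P : ι →₀ R[X]) {m : ι → ℕ}
    (hm : ∀ i, m i ≠ 0) (N : ℕ) :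
    (P.sum fun i Q => toPS Q * substPow (m i) (PowerSeries.X ^ N)) =
      ((P.sum fun i Q => Q * X ^ (m i * N) : R[X]) : PowerSeries R) := by
  rw [← coeToPowerSeries.ringHom_apply, Finsupp.sum, Finsupp.sum, map_sum]
  refine Finset.sum_congr rfl fun i _ => ?_
  simp only [toPS_eq_coe, substPow_X_pow (hm i), map_mul, map_pow,
    coeToPowerSeries.ringHom_apply, coe_X]

theorem exists_natDegree_lt {R ι : Type*} [Semiring R] (P : ι →₀ R[X]) (j : ℕ) :
    ∃ N, j < N ∧ ∀ i, (P i).natDegree < N := by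
  refine ⟨P.support.sup (fun i => (P i).natDegree) + j + 1, by omega, fun i => ?_⟩
  by_cases hi : i ∈ P.support
  · have := Finset.le_sup (f := fun i => (P i).natDegree) hi
    omega
  · simp [Finsupp.notMem_support_iff.mp hi]

theorem coeff_sum_mul_X_pow_mul {R ι : Type*} [Semiring R] (P : ι →₀ R[X]) {m : ι → ℕ}
    (hm : Function.Injective m) {N j : ℕ} (hdeg : ∀ i, (P i).natDegree < N) (hj : j < N)
    (a : ι) : (P.sum fun i Q => Q * X ^ (m i * N)).coeff (m a * N + j) = (P a).coeff j := by
  rw [Finsupp.sum, finsetSum_coeff, Finset.sum_eq_single a]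
  · rw [add_comm, coeff_mul_X_pow]
  · intro i _ hia
    rw [coeff_mul_X_pow']
    split_ifs with hle
    · by_contra hc
      have hd := (le_natDegree_of_ne_zero hc).trans_lt (hdeg i)
      have hsplit : N * m a + j = N * m i + (m a * N + j - m i * N) := by
        rw [mul_comm N, mul_comm N]; omega
      have hdiv := congrArg (· / N) hsplit
      simp only [Nat.mul_add_div (Nat.zero_lt_of_lt hj), Nat.div_eq_of_lt hj,
        Nat.div_eq_of_lt hd] at hdiv
      exact hia (hm hdiv.symm)
    · rfl
  · intro ha
    simp [Finsupp.notMem_support_iff.mp ha]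

theorem mahler_operator_representation_injective_general
    (K : Type*) [Field K] (r : ℕ) (k : Fin r → ℕ)
    (hk : ∀ i, 2 ≤ k i)
    (hindep : ∀ e : Fin r → ℤ, (∏ i, ((k i : ℚ) ^ (e i))) = 1 → e = 0)
    (P : (Fin r → ℕ) →₀ Polynomial K)
    (hP : ∀ F : PowerSeries K,
      (P.sum fun idx Q => toPS Q * substPow (∏ i, k i ^ idx i) F) = 0) :
    P = 0 := by
  have hk0 : ∀ i, k i ≠ 0 := fun i => by have := hk i; omega
  have hm0 (idx : Fin r → ℕ) : ∏ i, k i ^ idx i ≠ 0 :=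
    Finset.prod_ne_zero_iff.mpr fun i _ => pow_ne_zero _ (hk0 i)
  ext a j
  obtain ⟨N, hj, hdeg⟩ := exists_natDegree_lt P j
  have hsum : (P.sum fun idx Q => Q * X ^ ((∏ i, k i ^ idx i) * N)) = 0 :=
    coe_eq_zero_iff.mp ((sum_toPS_mul_substPow_X_pow P hm0 N).symm.trans (hP _))
  have hcoeff := coeff_sum_mul_X_pow_mul P
    (prod_pow_injective_of_multiplicativelyIndependent hk0 hindep) hdeg hj a
  rw [hsum, coeff_zero] at hcoeff
  exact hcoeff.symm

/-- For multiplicatively independent `k₁, …, k_r ≥ 2`, the representation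
of Mahler operators is faithful: if a finitely supported family of polynomial
coefficients `P` gives the zero operator `F ↦ Σ P_{i₁,…,i_r}(x) · F(x^{k₁^{i₁}⋯k_r^{i_r}})`
on `K⟦x⟧`, then `P = 0`. -/
theorem mahler_operator_representation_injective
    (K : Type*) [Field K] [CharZero K] (r : ℕ) (k : Fin r → ℕ)
    (hk : ∀ i, 2 ≤ k i)
    (hindep : ∀ e : Fin r → ℤ, (∏ i, ((k i : ℚ) ^ (e i))) = 1 → e = 0)
    (P : (Fin r → ℕ) →₀ Polynomial K)
    (hP : ∀ F : PowerSeries K,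
      (P.sum fun idx Q => toPS Q * substPow (∏ i, k i ^ idx i) F) = 0) :
    P = 0 :=
  mahler_operator_representation_injective_general K r k hk hindep P hP
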